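/- Bound on the partial derivative of the log-determinant Jeffreys penalty: with P = X(XᵀWX)^{-1}XᵀW and W̃_s diagonal with entries x_{ts}(1 − 2μ_t), μ_t ∈ (0,1), we have |tr(P W̃_s)| ≤ p · max_t |x_{ts}|. -/

import Mathlib

/-!
With `W = diag(w)`, `w > 0`, and `X` of full column rank, the Gram matrix `XᵀWX` is positive
definite, so `P = X (XᵀWX)⁻¹ XᵀW` has trace `tr ((XᵀWX)⁻¹ XᵀWX) = p`.
Its diagonal entries `P t t = w t · xₜᵀ (XᵀWX)⁻¹ xₜ` are nonnegative, hence
`|tr (P W̃ₛ)| = |∑ₜ P t t · x_{ts} (1 - 2μₜ)| ≤ (∑ₜ P t t) · maxₜ |x_{ts}| = p · maxₜ |x_{ts}|`.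
-/

open Matrix

namespace Matrix

variable {m n R : Type*} [Fintype n]

theorem mulVec_injective_of_rank_eq_card [Field R] {A : Matrix m n R}
    (hA : A.rank = Fintype.card n) : Function.Injective A.mulVec :=
  mulVec_injective_iff.2 <| linearIndependent_iff_card_eq_finrank_span.2 <| by
    rw [← hA, rank_eq_finrank_span_cols]
    rfl

variable [Fintype m]

theorem trace_mul_inv_mul_eq_card [CommRing R] [DecidableEq n] (A : Matrix m n R)
    (B : Matrix n m R) (h : IsUnit (B * A).det) : (A * (B * A)⁻¹ * B).trace = Fintype.card n := by
  rw [trace_mul_cycle, mul_nonsing_inv _ h, trace_one]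

theorem abs_trace_mul_diagonal_le [DecidableEq n] [Ring R] [LinearOrder R] [IsOrderedRing R]
    {A : Matrix n n R} {d : n → R} {K : R} (hA : ∀ i, 0 ≤ A i i) (hd : ∀ i, |d i| ≤ K) :
    |(A * diagonal d).trace| ≤ A.trace * K := by
  simp only [trace, diag, mul_diagonal]
  calc |∑ i, A i i * d i| ≤ ∑ i, |A i i * d i| := Finset.abs_sum_le_sum_abs _ _
    _ ≤ ∑ i, A i i * K := Finset.sum_le_sum fun i _ => by
        rw [abs_mul, abs_of_nonneg (hA i)]
        exact mul_le_mul_of_nonneg_left (hd i) (hA i)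
    _ = (∑ i, A i i) * K := (Finset.sum_mul ..).symm

variable [DecidableEq m]

noncomputable def weightedHat [DecidableEq n] (X : Matrix m n ℝ) (w : m → ℝ) : Matrix m m ℝ :=
  X * (Xᵀ * diagonal w * X)⁻¹ * Xᵀ * diagonal w

variable {X : Matrix m n ℝ} {w : m → ℝ}

theorem posDef_transpose_mul_diagonal_mul (hX : Function.Injective X.mulVec)
    (hw : ∀ i, 0 < w i) : (Xᵀ * diagonal w * X).PosDef := by
  simpa only [conjTranspose_eq_transpose_of_trivial] using
    (PosDef.diagonal hw).conjTranspose_mul_mul_same hX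

variable [DecidableEq n]

theorem trace_weightedHat (hX : Function.Injective X.mulVec) (hw : ∀ i, 0 < w i) :
    (weightedHat X w).trace = Fintype.card n := by
  have hM := (posDef_transpose_mul_diagonal_mul hX hw).isUnit
  rw [weightedHat, Matrix.mul_assoc _ Xᵀ]
  exact trace_mul_inv_mul_eq_card X _ ((isUnit_iff_isUnit_det _).1 hM)

theorem weightedHat_diag_nonneg (hX : Function.Injective X.mulVec) (hw : ∀ i, 0 < w i)
    (t : m) : 0 ≤ weightedHat X w t t := by
  have hS : (X * (Xᵀ * diagonal w * X)⁻¹ * Xᵀ).PosSemidef := by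
    simpa only [conjTranspose_eq_transpose_of_trivial] using
      (posDef_transpose_mul_diagonal_mul hX hw).inv.posSemidef.mul_mul_conjTranspose_same X
  rw [weightedHat, mul_diagonal]
  exact mul_nonneg hS.diag_nonneg (hw t).le

end Matrix

theorem jeffreys_partial_trace_bound (n p : ℕ) [NeZero n]
    (X : Matrix (Fin n) (Fin p) ℝ) (hX : X.rank = p)
    (μ : Fin n → ℝ) (hμ : ∀ t, μ t ∈ Set.Ioo (0 : ℝ) 1) (s : Fin p) :
    letI W := Matrix.diagonal (fun t => μ t * (1 - μ t))
    letI Wt := Matrix.diagonal (fun t => X t s * (1 - 2 * μ t))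
    |(X * (Xᵀ * W * X)⁻¹ * Xᵀ * W * Wt).trace| ≤
      (p : ℝ) * (Finset.univ.sup' Finset.univ_nonempty fun t : Fin n => |X t s|) := by
  set w : Fin n → ℝ := fun t => μ t * (1 - μ t)
  have hw : ∀ t, 0 < w t := fun t => mul_pos (hμ t).1 (sub_pos.2 (hμ t).2)
  have hXinj : Function.Injective X.mulVec :=
    mulVec_injective_of_rank_eq_card (by rw [hX, Fintype.card_fin])
  have hd : ∀ t, |X t s * (1 - 2 * μ t)| ≤
      Finset.univ.sup' Finset.univ_nonempty fun t : Fin n => |X t s| := fun t => by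
    have h2μ : |1 - 2 * μ t| ≤ 1 := abs_le.2 ⟨by linarith [(hμ t).2], by linarith [(hμ t).1]⟩
    calc |X t s * (1 - 2 * μ t)| ≤ |X t s| := by
          rw [abs_mul]; exact mul_le_of_le_one_right (abs_nonneg _) h2μ
      _ ≤ _ := Finset.le_sup' (fun t => |X t s|) (Finset.mem_univ t)
  show |(weightedHat X w * diagonal _).trace| ≤ _
  have := abs_trace_mul_diagonal_le (weightedHat_diag_nonneg hXinj hw) hd
  rwa [trace_weightedHat hXinj hw, Fintype.card_fin] at this
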